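/- Let 0 < D_i, D_j ≤ 1 and 0 < D_ij ≤ min(D_i, D_j). Setting d_{L(Γi)} = D_i, d_{L(Γj)} = D_j, and d_{max{L(Γi),L(Γj)}} = min(D_i, D_j), the following inequality holds: (1/2)·log[ ((1+D_i)/(2D_i)) · ((1+D_j)/(2D_j)) · ((D_ij + min(D_i,D_j)) / ((1 + min(D_i,D_j))·D_ij)) ] ≥ min( (1/2)log(1/D_i), (1/2)log(1/D_j) ) + (1/2)log(1/D_ij) − 1. -/

import Mathlib

/-!
Write `m ≤ M` for `min D_i D_j` and `max D_i D_j`. Since `D_i D_j = m M` and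
`(1 + D_i)(1 + D_j) = (1 + m)(1 + M)`, the argument of the logarithm equals
`(1 + M)(D_ij + m) / (4 m M D_ij)`, which is at least `1 / (4 M D_ij)` because
`m ≤ (1 + M)(D_ij + m)`. Taking `logb 2` turns this into
`½ log(1/M) + ½ log(1/D_ij) − 1`, and `½ log(1/M)` is one of the two terms of the minimum.
-/

theorem min_apply_le_apply_max {α β : Type*} [LinearOrder α] [LinearOrder β] (f : α → β)
    (a b : α) : min (f a) (f b) ≤ f (max a b) := by
  rcases le_total a b with h | h
  · rw [max_eq_right h]; exact min_le_right _ _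
  · rw [max_eq_left h]; exact min_le_left _ _

theorem logb_two_one_div_four_mul {x y : ℝ} (hx : 0 < x) (hy : 0 < y) :
    Real.logb 2 (1 / (4 * x * y)) = Real.logb 2 (1 / x) + Real.logb 2 (1 / y) - 2 := by
  have h4 : Real.logb 2 4 = 2 := by
    rw [show (4 : ℝ) = 2 ^ (2 : ℕ) by norm_num, Real.logb_pow, Real.logb_self_eq_one one_lt_two]
    norm_num
  simp only [one_div, Real.logb_inv]
  rw [Real.logb_mul (by positivity) hy.ne', Real.logb_mul (by norm_num) hx.ne', h4]
  ring

theorem one_div_four_mul_le_of_le {m M c : ℝ} (hm : 0 < m) (hmM : m ≤ M) (hc : 0 < c) :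
    1 / (4 * M * c) ≤ (1 + m) / (2 * m) * ((1 + M) / (2 * M)) * ((c + m) / ((1 + m) * c)) := by
  have hM : 0 < M := hm.trans_le hmM
  rw [div_mul_div_comm, div_mul_div_comm, div_le_div_iff₀ (by positivity) (by positivity)]
  have hm_le : m ≤ (1 + M) * (c + m) := by nlinarith
  have hscaled := mul_le_mul_of_nonneg_left hm_le (by positivity : 0 ≤ 4 * M * c * (1 + m))
  linarith

theorem one_div_four_max_mul_le {a b c : ℝ} (ha : 0 < a) (hb : 0 < b) (hc : 0 < c) :
    1 / (4 * max a b * c) ≤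
      (1 + a) / (2 * a) * ((1 + b) / (2 * b)) * ((c + min a b) / ((1 + min a b) * c)) := by
  rcases le_total a b with h | h
  · rw [min_eq_left h, max_eq_right h]
    exact one_div_four_mul_le_of_le ha h hc
  · rw [min_eq_right h, max_eq_left h, mul_comm ((1 + a) / (2 * a))]
    exact one_div_four_mul_le_of_le hb h hc

theorem stmt_8_general (Di Dj Dij : ℝ)
    (hDi : 0 < Di) (hDj : 0 < Dj)
    (hDij : 0 < Dij) :
    (1 / 2) * Real.logb 2
        (((1 + Di) / (2 * Di)) * ((1 + Dj) / (2 * Dj)) *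
          ((Dij + min Di Dj) / ((1 + min Di Dj) * Dij))) ≥
      min ((1 / 2) * Real.logb 2 (1 / Di)) ((1 / 2) * Real.logb 2 (1 / Dj)) +
        (1 / 2) * Real.logb 2 (1 / Dij) - 1 := by
  have hmax : 0 < max Di Dj := hDi.trans_le (le_max_left _ _)
  calc min ((1 / 2) * Real.logb 2 (1 / Di)) ((1 / 2) * Real.logb 2 (1 / Dj)) +
        (1 / 2) * Real.logb 2 (1 / Dij) - 1
      ≤ (1 / 2) * Real.logb 2 (1 / max Di Dj) + (1 / 2) * Real.logb 2 (1 / Dij) - 1 := by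
        gcongr
        exact min_apply_le_apply_max (fun x => (1 / 2) * Real.logb 2 (1 / x)) Di Dj
    _ = (1 / 2) * Real.logb 2 (1 / (4 * max Di Dj * Dij)) := by
        rw [logb_two_one_div_four_mul hmax hDij]
        ring
    _ ≤ _ := by
        gcongr
        · exact one_lt_two
        · exact one_div_four_max_mul_le hDi hDj hDij

theorem stmt_8 (Di Dj Dij : ℝ)
    (hDi : 0 < Di) (hDi1 : Di ≤ 1) (hDj : 0 < Dj) (hDj1 : Dj ≤ 1)
    (hDij : 0 < Dij) (hle : Dij ≤ min Di Dj) :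
    (1 / 2) * Real.logb 2
        (((1 + Di) / (2 * Di)) * ((1 + Dj) / (2 * Dj)) *
          ((Dij + min Di Dj) / ((1 + min Di Dj) * Dij))) ≥
      min ((1 / 2) * Real.logb 2 (1 / Di)) ((1 / 2) * Real.logb 2 (1 / Dj)) +
        (1 / 2) * Real.logb 2 (1 / Dij) - 1 :=
  stmt_8_general Di Dj Dij hDi hDj hDij
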